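/- arXiv:2512.00702 — 8 statements merged into one kernel-verified Lean document; each statement's English description precedes it below -/
import Mathlib

section
/- In the complement of a minimal prime graph, no vertex has degree 1. -/
/-- A minimal prime graph complement: a graph on at least 2 vertices that is
triangle-free, 3-colorable, edge-maximal with respect to these properties,
and whose complement is connected. -/
def IsMinimalPrimeGraphComplement {V : Type*} [Fintype V] (G : SimpleGraph V) : Prop :=
  Nontrivial V ∧ G.CliqueFree 3 ∧ G.Colorable 3 ∧ Gᶜ.Connected ∧
    ∀ u v : V, u ≠ v → ¬ G.Adj u v →
      ¬ ((G ⊔ SimpleGraph.fromEdgeSet {s(u, v)}).CliqueFree 3 ∧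
         (G ⊔ SimpleGraph.fromEdgeSet {s(u, v)}).Colorable 3)

private lemma fin3_exists_ne (a b : Fin 3) : ∃ k : Fin 3, k ≠ a ∧ k ≠ b := by revert a b; decide

theorem no_degree_one_vertex {V : Type*} [Fintype V] (G : SimpleGraph V)
    [DecidableRel G.Adj] (hG : IsMinimalPrimeGraphComplement G) (v : V) :
    G.degree v ≠ 1 := by
  intro hdeg
  classical
  obtain ⟨hnt, hcf, hcol, hconn, hmax⟩ := hG
  obtain ⟨w, hw⟩ := Finset.card_eq_one.mp hdeg
  have hvw : G.Adj v w := by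
    have : w ∈ G.neighborFinset v := by rw [hw]; exact Finset.mem_singleton_self w
    rwa [SimpleGraph.mem_neighborFinset] at this
  have huniq : ∀ x, G.Adj v x → x = w := by
    intro x hx
    have : x ∈ G.neighborFinset v := by rwa [SimpleGraph.mem_neighborFinset]
    rw [hw] at this
    exact Finset.mem_singleton.mp this
  -- Main claim: w is adjacent to every vertex other than v and w.
  have hadj : ∀ u, u ≠ v → u ≠ w → G.Adj w u := by
    intro u huv huw
    by_contra hwu
    have hnadj : ¬ G.Adj u v := fun h => huw (huniq u h.symm)
    have adj' : ∀ x y, (G ⊔ SimpleGraph.fromEdgeSet {s(u, v)}).Adj x y →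
        G.Adj x y ∨ (x = u ∧ y = v) ∨ (x = v ∧ y = u) := by
      intro x y hxy
      rcases hxy with h | h
      · exact Or.inl h
      · rw [SimpleGraph.fromEdgeSet_adj] at h
        have h1 := h.1
        simp only [Set.mem_singleton_iff, Sym2.eq_iff] at h1
        tauto
    have hkey : ∀ x, G.Adj x u → G.Adj x v → False := by
      intro x h1 h2
      have := huniq x h2.symm
      subst this
      exact hwu h1
    have hCF : (G ⊔ SimpleGraph.fromEdgeSet {s(u, v)}).CliqueFree 3 := by
      intro t ht
      obtain ⟨a, b, c, hab', hac', hbc', rfl⟩ := Finset.card_eq_three.mp ht.2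
      rw [SimpleGraph.is3Clique_triple_iff] at ht
      obtain ⟨hab, hac, hbc⟩ := ht
      rcases adj' a b hab with h1 | ⟨ha1, hb1⟩ | ⟨ha1, hb1⟩
      · rcases adj' a c hac with h2 | ⟨ha2, hc2⟩ | ⟨ha2, hc2⟩
        · rcases adj' b c hbc with h3 | ⟨hb3, hc3⟩ | ⟨hb3, hc3⟩
          · exact hcf {a, b, c} (SimpleGraph.is3Clique_triple_iff.mpr ⟨h1, h2, h3⟩)
          · exact hkey a (hb3 ▸ h1) (hc3 ▸ h2)
          · exact hkey a (hc3 ▸ h2) (hb3 ▸ h1)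
        · rcases adj' b c hbc with h3 | ⟨hb3, hc3⟩ | ⟨hb3, hc3⟩
          · exact hkey b (ha2 ▸ h1.symm) (hc2 ▸ h3)
          · exact hab' (ha2.trans hb3.symm)
          · exact huv (hc3.symm.trans hc2)
        · rcases adj' b c hbc with h3 | ⟨hb3, hc3⟩ | ⟨hb3, hc3⟩
          · exact hkey b (hc2 ▸ h3) (ha2 ▸ h1.symm)
          · exact huv (hc2.symm.trans hc3)
          · exact hab' (ha2.trans hb3.symm)
      · rcases adj' a c hac with h2 | ⟨ha2, hc2⟩ | ⟨ha2, hc2⟩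
        · rcases adj' b c hbc with h3 | ⟨hb3, hc3⟩ | ⟨hb3, hc3⟩
          · exact hkey c (ha1 ▸ h2.symm) (hb1 ▸ h3.symm)
          · exact huv (hb3.symm.trans hb1)
          · exact hac' (ha1.trans hc3.symm)
        · exact hbc' (hb1.trans hc2.symm)
        · exact huv (ha1.symm.trans ha2)
      · rcases adj' a c hac with h2 | ⟨ha2, hc2⟩ | ⟨ha2, hc2⟩
        · rcases adj' b c hbc with h3 | ⟨hb3, hc3⟩ | ⟨hb3, hc3⟩
          · exact hkey c (hb1 ▸ h3.symm) (ha1 ▸ h2.symm)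
          · exact hac' (ha1.trans hc3.symm)
          · exact huv (hb1.symm.trans hb3)
        · exact huv (ha2.symm.trans ha1)
        · exact hbc' (hb1.trans hc2.symm)
    have hCol : (G ⊔ SimpleGraph.fromEdgeSet {s(u, v)}).Colorable 3 := by
      obtain ⟨col⟩ := hcol
      obtain ⟨k, hkw, hku⟩ := fin3_exists_ne (col w) (col u)
      refine ⟨SimpleGraph.Coloring.mk (fun x => if x = v then k else col x) ?_⟩
      intro a b hab
      by_cases ha : a = v <;> by_cases hb : b = v
      · exact (hab.ne (ha.trans hb.symm)).elim
      · simp only [if_pos ha, if_neg hb]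
        rw [ha] at hab
        rcases adj' v b hab with h1 | ⟨h2, h3⟩ | ⟨_, h3⟩
        · rw [huniq b h1]; exact hkw
        · exact (hb h3).elim
        · rw [h3]; exact hku
      · simp only [if_pos hb, if_neg ha]
        rw [hb] at hab
        rcases adj' a v hab with h1 | ⟨h2, h3⟩ | ⟨h2, _⟩
        · rw [huniq a h1.symm]; exact fun h => hkw h.symm
        · rw [h2]; exact fun h => hku h.symm
        · exact (ha h2).elim
      · simp only [if_neg ha, if_neg hb]
        rcases adj' a b hab with h1 | ⟨_, h3⟩ | ⟨h2, _⟩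
        · exact col.valid h1
        · exact (hb h3).elim
        · exact (ha h2).elim
    exact hmax u v huv hnadj ⟨hCF, hCol⟩
  -- w is adjacent to every other vertex, so w is isolated in Gᶜ.
  have hallw : ∀ x, x ≠ w → G.Adj w x := by
    intro x hx
    by_cases hxv : x = v
    · subst hxv; exact hvw.symm
    · exact hadj x hxv hx
  obtain ⟨x, hxw⟩ := exists_ne w
  obtain ⟨p⟩ := hconn.preconnected w x
  cases p with
  | nil => exact hxw rfl
  | cons h _ =>
    rw [SimpleGraph.compl_adj] at h
    exact h.2 (hallw _ (Ne.symm h.1))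
end

section
/- Let G be a minimal prime graph complement with a vertex X of degree 2 having neighbors A and B, and let S_Z be the set of vertices distinct from X adjacent to neither A nor B. Then no two vertices of S_Z are adjacent. -/
namespace SimpleGraph

variable {V α : Type*} {G : SimpleGraph V} {u v : V}

theorem CliqueFree.sup_edge_of_forall_not_adj (h : G.CliqueFree 3) (hne : u ≠ v)
    (hcommon : ∀ w, G.Adj u w → ¬ G.Adj v w) : (G ⊔ edge u v).CliqueFree 3 := by
  classical
  -- a new triangle contains the new edge `uv`, and its third vertex is a common neighbour
  intro t ht
  have hu : u ∈ t := h.mem_of_sup_edge_isNClique ht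
  have hv : v ∈ t := h.mem_of_sup_edge_isNClique (edge_comm u v ▸ ht)
  have hcard : 0 < ((t.erase u).erase v).card := by
    grind [Finset.card_erase_of_mem, ht.card_eq]
  obtain ⟨w, hw⟩ := Finset.card_pos.mp hcard
  obtain ⟨hwv, hwu, hwt⟩ : w ≠ v ∧ w ≠ u ∧ w ∈ t := by simpa using hw
  have hGu : G.IsClique (↑t \ {v}) := (edge_comm u v ▸ ht.1).sdiff_of_sup_edge
  have hGv : G.IsClique (↑t \ {u}) := ht.1.sdiff_of_sup_edge
  exact hcommon w (hGu (by simp [hu, hne]) (by simp [hwt, hwv]) hwu.symm)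
    (hGv (by simp [hv, hne.symm]) (by simp [hwt, hwu]) hwv.symm)

def Coloring.supEdge (c : G.Coloring α) (h : c u ≠ c v) : (G ⊔ edge u v).Coloring α :=
  Coloring.mk c fun {x y} hxy => by
    simp only [sup_adj, edge_adj] at hxy
    rcases hxy with hxy | ⟨⟨rfl, rfl⟩ | ⟨rfl, rfl⟩, -⟩
    exacts [c.valid hxy, h, h.symm]

end SimpleGraph

open SimpleGraph

theorem IsMinimalPrimeGraphComplement.coloring_eq_of_forall_not_adj {V : Type*} [Fintype V]
    {G : SimpleGraph V} (hG : IsMinimalPrimeGraphComplement G) {u v : V} (huv : u ≠ v)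
    (hnadj : ¬ G.Adj u v) (hcommon : ∀ w, G.Adj u w → ¬ G.Adj v w) (c : G.Coloring (Fin 3)) :
    c u = c v := by
  by_contra hc
  exact hG.2.2.2.2 u v huv hnadj ⟨hG.2.1.sup_edge_of_forall_not_adj huv hcommon, ⟨c.supEdge hc⟩⟩

theorem SZ_no_internal_edges_general {V : Type*} [Fintype V] (G : SimpleGraph V)
    (hG : IsMinimalPrimeGraphComplement G) (X A B : V)
    (hdeg : ∀ v, G.Adj X v → v = A ∨ v = B)
    (a b : V)
    (haX : a ≠ X) (haA : ¬ G.Adj a A) (haB : ¬ G.Adj a B)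
    (hbX : b ≠ X) (hbA : ¬ G.Adj b A) (hbB : ¬ G.Adj b B) :
    ¬ G.Adj a b := by
  intro hab
  obtain ⟨c⟩ := hG.2.2.1
  have hcolor (z : V) (hzX : z ≠ X) (hXz : ¬ G.Adj X z) (hzA : ¬ G.Adj z A)
      (hzB : ¬ G.Adj z B) : c X = c z :=
    hG.coloring_eq_of_forall_not_adj hzX.symm hXz (fun w hXw hzw => by
      rcases hdeg w hXw with rfl | rfl
      exacts [hzA hzw, hzB hzw]) c
  have hXa : ¬ G.Adj X a := fun h => by
    rcases hdeg a h with rfl | rfl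
    exacts [hbA hab.symm, hbB hab.symm]
  have hXb : ¬ G.Adj X b := fun h => by
    rcases hdeg b h with rfl | rfl
    exacts [haA hab, haB hab]
  exact c.valid hab ((hcolor a haX hXa haA haB).symm.trans (hcolor b hbX hXb hbA hbB))

theorem SZ_no_internal_edges {V : Type*} [Fintype V] (G : SimpleGraph V)
    (hG : IsMinimalPrimeGraphComplement G) (X A B : V)
    (hXA : G.Adj X A) (hXB : G.Adj X B) (hAB : A ≠ B)
    (hdeg : ∀ v, G.Adj X v → v = A ∨ v = B)
    (a b : V)
    (haX : a ≠ X) (haA : ¬ G.Adj a A) (haB : ¬ G.Adj a B)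
    (hbX : b ≠ X) (hbA : ¬ G.Adj b A) (hbB : ¬ G.Adj b B) :
    ¬ G.Adj a b :=
  SZ_no_internal_edges_general G hG X A B hdeg a b haX haA haB hbX hbA hbB
end

section
/- Let G be a minimal prime graph complement with a vertex X of degree 2 having neighbors A and B. If a is a vertex adjacent to A but not to B, and y is a vertex adjacent to both A and B, then a and y are not adjacent. -/
theorem SA_not_adj_SY {V : Type*} [Fintype V] (G : SimpleGraph V)
    (hG : IsMinimalPrimeGraphComplement G) (X A B : V)
    (hXA : G.Adj X A) (hXB : G.Adj X B) (hAB : A ≠ B)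
    (hdeg : ∀ v, G.Adj X v → v = A ∨ v = B)
    (a y : V)
    (haA : G.Adj a A) (haB : ¬ G.Adj a B)
    (hyA : G.Adj y A) (hyB : G.Adj y B) :
    ¬ G.Adj a y := by
  classical
  intro hay
  exact hG.2.1 ({a, y, A} : Finset V) (by
    simp [SimpleGraph.is3Clique_triple_iff, hay, haA, hyA])
end

section
/- Let G be a minimal prime graph complement with a vertex X of degree 2 with neighbors A and B. Define S_A = vertices (≠ X) adjacent to A but not B, S_B = vertices (≠ X) adjacent to B but not A, S_Y = vertices (≠ X) adjacent to both, S_Z = vertices (≠ X, A, B) adjacent to neither. Then the coloring assigning color 1 to {X} ∪ S_A ∪ S_Y, color 2 to {A} ∪ S_B, and color 3 to {B} ∪ S_Z is a proper 3-coloring of G. -/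
/-- The coloring from the paper: color 1 on {X} ∪ S_A ∪ S_Y, color 2 on {A} ∪ S_B,
color 3 on the rest (which is {B} ∪ S_Z). -/
def paperColoring {V : Type*} [DecidableEq V] (G : SimpleGraph V) [DecidableRel G.Adj]
    (X A B : V) : V → Fin 3 := fun v =>
  if v = X ∨ (v ≠ X ∧ G.Adj v A ∧ ¬ G.Adj v B) ∨ (v ≠ X ∧ G.Adj v A ∧ G.Adj v B) then 0
  else if v = A ∨ (v ≠ X ∧ G.Adj v B ∧ ¬ G.Adj v A) then 1
  else 2

lemma addEdge_adj {V : Type*} (G : SimpleGraph V) (z X u v : V) (hzX : z ≠ X) :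
    (G ⊔ SimpleGraph.fromEdgeSet {s(z, X)}).Adj u v ↔
      G.Adj u v ∨ (u = z ∧ v = X) ∨ (u = X ∧ v = z) := by
  simp only [SimpleGraph.sup_adj, SimpleGraph.fromEdgeSet_adj, Set.mem_singleton_iff,
    Sym2.eq_iff]
  constructor
  · rintro (h | ⟨h | h, -⟩) <;> tauto
  · rintro (h | ⟨rfl, rfl⟩ | ⟨rfl, rfl⟩) <;> tauto

lemma key {V : Type*} [Fintype V] [DecidableEq V] (G : SimpleGraph V)
    (hG : IsMinimalPrimeGraphComplement G) (X A B : V)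
    (hdeg : ∀ v, G.Adj X v → v = A ∨ v = B)
    (z : V) (hzX : z ≠ X) (hzA : ¬ G.Adj z A) (hzB : ¬ G.Adj z B)
    (hnadj : ¬ G.Adj z X)
    (c : G.Coloring (Fin 3)) : c z = c X := by
  by_contra hne
  apply hG.2.2.2.2 z X hzX hnadj
  have tri : ∀ a b d, G.Adj a b → G.Adj a d → G.Adj b d → False := fun a b d h1 h2 h3 =>
    hG.2.1 {a, b, d} (SimpleGraph.is3Clique_triple_iff.mpr ⟨h1, h2, h3⟩)
  constructor
  · intro s hs
    rw [SimpleGraph.is3Clique_iff] at hs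
    obtain ⟨a, b, d, hab, had, hbd, -⟩ := hs
    rw [addEdge_adj G z X _ _ hzX] at hab had hbd
    rcases hab with hab | ⟨rfl, rfl⟩ | ⟨rfl, rfl⟩ <;>
      rcases had with had | ⟨h1, h2⟩ | ⟨h1, h2⟩ <;>
        rcases hbd with hbd | ⟨h3, h4⟩ | ⟨h3, h4⟩ <;> subst_vars <;>
          first
            | exact tri _ _ _ hab had hbd
            | exact hnadj hab | exact hnadj had | exact hnadj hbd
            | exact hnadj hab.symm | exact hnadj had.symm | exact hnadj hbd.symm
            | exact G.irrefl hab | exact G.irrefl had | exact G.irrefl hbd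
            | exact hzX rfl
            | (rcases hdeg _ hab with rfl | rfl; exacts [hzA had, hzB had])
            | (rcases hdeg _ hab with rfl | rfl; exacts [hzA had.symm, hzB had.symm])
            | (rcases hdeg _ hab with rfl | rfl; exacts [hzA hbd, hzB hbd])
            | (rcases hdeg _ hab with rfl | rfl; exacts [hzA hbd.symm, hzB hbd.symm])
            | (rcases hdeg _ hab.symm with rfl | rfl; exacts [hzA had, hzB had])
            | (rcases hdeg _ hab.symm with rfl | rfl; exacts [hzA had.symm, hzB had.symm])
            | (rcases hdeg _ hab.symm with rfl | rfl; exacts [hzA hbd, hzB hbd])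
            | (rcases hdeg _ hab.symm with rfl | rfl; exacts [hzA hbd.symm, hzB hbd.symm])
            | (rcases hdeg _ had with rfl | rfl; exacts [hzA hab, hzB hab])
            | (rcases hdeg _ had with rfl | rfl; exacts [hzA hab.symm, hzB hab.symm])
            | (rcases hdeg _ had with rfl | rfl; exacts [hzA hbd, hzB hbd])
            | (rcases hdeg _ had with rfl | rfl; exacts [hzA hbd.symm, hzB hbd.symm])
            | (rcases hdeg _ had.symm with rfl | rfl; exacts [hzA hab, hzB hab])
            | (rcases hdeg _ had.symm with rfl | rfl; exacts [hzA hab.symm, hzB hab.symm])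
            | (rcases hdeg _ had.symm with rfl | rfl; exacts [hzA hbd, hzB hbd])
            | (rcases hdeg _ had.symm with rfl | rfl; exacts [hzA hbd.symm, hzB hbd.symm])
            | (rcases hdeg _ hbd with rfl | rfl; exacts [hzA hab, hzB hab])
            | (rcases hdeg _ hbd with rfl | rfl; exacts [hzA hab.symm, hzB hab.symm])
            | (rcases hdeg _ hbd with rfl | rfl; exacts [hzA had, hzB had])
            | (rcases hdeg _ hbd with rfl | rfl; exacts [hzA had.symm, hzB had.symm])
            | (rcases hdeg _ hbd.symm with rfl | rfl; exacts [hzA hab, hzB hab])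
            | (rcases hdeg _ hbd.symm with rfl | rfl; exacts [hzA hab.symm, hzB hab.symm])
            | (rcases hdeg _ hbd.symm with rfl | rfl; exacts [hzA had, hzB had])
            | (rcases hdeg _ hbd.symm with rfl | rfl; exacts [hzA had.symm, hzB had.symm])
  · exact ⟨SimpleGraph.Coloring.mk c (fun {u v} h => by
      rw [addEdge_adj G z X u v hzX] at h
      rcases h with h | ⟨rfl, rfl⟩ | ⟨rfl, rfl⟩
      · exact c.valid h
      · exact hne
      · exact fun e => hne e.symm)⟩

theorem paperColoring_proper {V : Type*} [Fintype V] [DecidableEq V] (G : SimpleGraph V)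
    [DecidableRel G.Adj]
    (hG : IsMinimalPrimeGraphComplement G) (X A B : V)
    (hXA : G.Adj X A) (hXB : G.Adj X B) (hAB : A ≠ B)
    (hdeg : ∀ v, G.Adj X v → v = A ∨ v = B) :
    ∀ u w : V, G.Adj u w → paperColoring G X A B u ≠ paperColoring G X A B w := by
  unfold paperColoring
  have tri : ∀ a b d, G.Adj a b → G.Adj a d → G.Adj b d → False := fun a b d h1 h2 h3 =>
    hG.2.1 {a, b, d} (SimpleGraph.is3Clique_triple_iff.mpr ⟨h1, h2, h3⟩)
  have hnBA : ¬ G.Adj B A := fun h => tri X A B hXA hXB h.symm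
  intro u w huw heq
  split_ifs at heq
  · -- both class 0
    rename_i h0u h0w
    rcases h0u with rfl | ⟨hu, huA, -⟩ | ⟨hu, huA, -⟩ <;>
      rcases h0w with rfl | ⟨hw, hwA, -⟩ | ⟨hw, hwA, -⟩
    · exact G.irrefl huw
    all_goals first
      | (rcases hdeg _ huw with rfl | rfl
         · exact G.irrefl hwA
         · exact hnBA hwA)
      | (rcases hdeg _ huw.symm with rfl | rfl
         · exact G.irrefl huA
         · exact hnBA huA)
      | exact tri u w A huw huA hwA
  · exact absurd heq (by decide)
  · exact absurd heq (by decide)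
  · exact absurd heq (by decide)
  · -- both class 1
    rename_i h0u h1u h0w h1w
    rcases h1u with rfl | ⟨hu, huB, hunA⟩ <;> rcases h1w with rfl | ⟨hw, hwB, hwnA⟩
    · exact G.irrefl huw
    · exact hwnA huw.symm
    · exact hunA huw
    · exact tri u w B huw huB hwB
  · exact absurd heq (by decide)
  · exact absurd heq (by decide)
  · exact absurd heq (by decide)
  · -- both class 2
    rename_i h0u h1u h0w h1w
    push_neg at h0u h0w h1u h1w
    obtain ⟨huX, hu1, hu2⟩ := h0u
    obtain ⟨hwX, hw1, hw2⟩ := h0w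
    obtain ⟨huA, hu3⟩ := h1u
    obtain ⟨hwA, hw3⟩ := h1w
    have hunA : ¬ G.Adj u A := fun h => hu2 huX h (hu1 huX h)
    have hwnA : ¬ G.Adj w A := fun h => hw2 hwX h (hw1 hwX h)
    have hunB : ¬ G.Adj u B := fun h => hunA (hu3 huX h)
    have hwnB : ¬ G.Adj w B := fun h => hwnA (hw3 hwX h)
    have huB : u ≠ B := fun h => hwnB (h ▸ huw).symm
    have hwB : w ≠ B := fun h => hunB (h ▸ huw)
    have hunX : ¬ G.Adj u X := fun h => (hdeg _ h.symm).elim huA huB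
    have hwnX : ¬ G.Adj w X := fun h => (hdeg _ h.symm).elim hwA hwB
    obtain ⟨c⟩ := hG.2.2.1
    have h1 := key G hG X A B hdeg u huX hunA hunB hunX c
    have h2 := key G hG X A B hdeg w hwX hwnA hwnB hwnX c
    exact c.valid huw (h1.trans h2.symm)
end

section
/- Let G be a minimal prime graph complement with a vertex X of degree 2 having neighbors A and B. If a ≠ X is adjacent to A but not B, and b ≠ X is adjacent to B but not A, then a and b are adjacent in G. -/
lemma cf_add {V : Type*} (G : SimpleGraph V) (hCF : G.CliqueFree 3) (u v : V)
    (h : ∀ w, G.Adj w u → G.Adj w v → False) :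
    (G ⊔ SimpleGraph.fromEdgeSet {s(u, v)}).CliqueFree 3 := by
  classical
  intro s hs
  rw [SimpleGraph.is3Clique_iff] at hs
  obtain ⟨x, y, z, hxy, hxz, hyz, hseq⟩ := hs
  have hne_xy := hxy.ne; have hne_xz := hxz.ne; have hne_yz := hyz.ne
  have decomp : ∀ p q : V, (G ⊔ SimpleGraph.fromEdgeSet {s(u,v)}).Adj p q →
      G.Adj p q ∨ ((p = u ∧ q = v) ∨ (p = v ∧ q = u)) := by
    intro p q hpq
    rcases hpq with h' | h'
    · exact Or.inl h'
    · rw [SimpleGraph.fromEdgeSet_adj, Set.mem_singleton_iff, Sym2.eq_iff] at h'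
      exact Or.inr h'.1
  rcases decomp _ _ hxy with exy | exy <;> rcases decomp _ _ hxz with exz | exz <;>
    rcases decomp _ _ hyz with eyz | eyz
  · exact hCF {x,y,z} (SimpleGraph.is3Clique_triple_iff.mpr ⟨exy, exz, eyz⟩)
  · rcases eyz with ⟨rfl, rfl⟩ | ⟨rfl, rfl⟩
    · exact h x exy exz
    · exact h x exz exy
  · rcases exz with ⟨rfl, rfl⟩ | ⟨rfl, rfl⟩
    · exact h y exy.symm eyz
    · exact h y eyz exy.symm
  · obtain ⟨h1, h2⟩ | ⟨h1, h2⟩ := exz <;> obtain ⟨h3, h4⟩ | ⟨h3, h4⟩ := eyz <;> subst_vars <;>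
      simp_all
  · rcases exy with ⟨rfl, rfl⟩ | ⟨rfl, rfl⟩
    · exact h z exz.symm eyz.symm
    · exact h z eyz.symm exz.symm
  · obtain ⟨h1, h2⟩ | ⟨h1, h2⟩ := exy <;> obtain ⟨h3, h4⟩ | ⟨h3, h4⟩ := eyz <;> subst_vars <;>
      simp_all
  · obtain ⟨h1, h2⟩ | ⟨h1, h2⟩ := exy <;> obtain ⟨h3, h4⟩ | ⟨h3, h4⟩ := exz <;> subst_vars <;>
      simp_all
  · obtain ⟨h1, h2⟩ | ⟨h1, h2⟩ := exy <;> obtain ⟨h3, h4⟩ | ⟨h3, h4⟩ := exz <;> subst_vars <;>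
      simp_all

lemma col_add {V : Type*} (G : SimpleGraph V) (u v : V) (g : V → Fin 3)
    (hg : ∀ p q, G.Adj p q → g p ≠ g q) (huv : g u ≠ g v) :
    (G ⊔ SimpleGraph.fromEdgeSet {s(u, v)}).Colorable 3 := by
  refine ⟨SimpleGraph.Coloring.mk g ?_⟩
  intro p q hpq
  rcases hpq with h' | h'
  · exact hg _ _ h'
  · rw [SimpleGraph.fromEdgeSet_adj, Set.mem_singleton_iff, Sym2.eq_iff] at h'
    rcases h'.1 with ⟨rfl, rfl⟩ | ⟨rfl, rfl⟩
    · exact huv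
    · exact huv.symm

theorem SA_adj_SB {V : Type*} [Fintype V] (G : SimpleGraph V)
    (hG : IsMinimalPrimeGraphComplement G) (X A B : V)
    (hXA : G.Adj X A) (hXB : G.Adj X B) (hAB : A ≠ B)
    (hdeg : ∀ v, G.Adj X v → v = A ∨ v = B)
    (a b : V)
    (haX : a ≠ X) (haA : G.Adj a A) (haB : ¬ G.Adj a B)
    (hbX : b ≠ X) (hbB : G.Adj b B) (hbA : ¬ G.Adj b A) :
    G.Adj a b := by
  classical
  obtain ⟨hnt, hCF, hCol, hconn, hmax⟩ := hG
  have htri : ∀ {x y z : V}, G.Adj x y → G.Adj x z → G.Adj y z → False := by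
    intro x y z h1 h2 h3
    exact hCF {x, y, z} (SimpleGraph.is3Clique_triple_iff.mpr ⟨h1, h2, h3⟩)
  by_cases haB' : a = B
  · subst haB'; exact hbB.symm
  by_cases hbA' : b = A
  · subst hbA'; exact haA
  by_contra hab
  have hne_ab : a ≠ b := fun h => hbA (h ▸ haA)
  have hXa : ¬ G.Adj X a := by
    intro h; rcases hdeg a h with rfl | rfl
    · exact G.irrefl haA
    · exact haB' rfl
  have hAB' : ¬ G.Adj A B := fun h => htri hXA hXB h
  -- rigidity of vertices not adjacent to A nor B
  have hrig : ∀ t, t ≠ A → t ≠ B → ¬G.Adj t A → ¬G.Adj t B →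
      ∀ g : V → Fin 3, (∀ p q, G.Adj p q → g p ≠ g q) → g t = g X := by
    intro t htA htB htnA htnB g hg
    by_contra hne
    have hXt : X ≠ t := by rintro rfl; exact htnA hXA
    have hXtadj : ¬ G.Adj X t := by
      intro h; rcases hdeg t h with rfl | rfl
      · exact htA rfl
      · exact htB rfl
    refine hmax X t hXt hXtadj ⟨cf_add G hCF X t ?_, col_add G X t g hg ?_⟩
    · intro w hwX hwt
      rcases hdeg w hwX.symm with rfl | rfl
      · exact htnA hwt.symm
      · exact htnB hwt.symm
    · exact fun h => hne h.symm
  -- the explicit coloring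
  set C0 : V → Prop := fun v => v = A ∨ (G.Adj v B ∧ ¬ G.Adj v A) with hC0
  set C2 : V → Prop := fun v => v = X ∨ (G.Adj v A ∧ G.Adj v B) ∨
      (G.Adj v A ∧ ∃ t, (t ≠ A ∧ t ≠ B ∧ ¬G.Adj t A ∧ ¬G.Adj t B) ∧ G.Adj v t) with hC2
  set f : V → Fin 3 := fun v => if C0 v then 0 else if C2 v then 2 else 1 with hfdef
  have hf0 : ∀ v, C0 v → f v = 0 := by intro v h; simp only [hfdef, if_pos h]
  have hf2 : ∀ v, ¬ C0 v → C2 v → f v = 2 := by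
    intro v h1 h2; simp only [hfdef, if_neg h1, if_pos h2]
  have hf1 : ∀ v, ¬ C0 v → ¬ C2 v → f v = 1 := by
    intro v h1 h2; simp only [hfdef, if_neg h1, if_neg h2]
  -- properness
  have hfproper : ∀ p q, G.Adj p q → f p ≠ f q := by
    intro p q hpq heq
    by_cases c0p : C0 p <;> by_cases c0q : C0 q
    · -- both class 0
      rcases c0p with rfl | ⟨hpB, hpA⟩ <;> rcases c0q with rfl | ⟨hqB, hqA⟩
      · exact G.irrefl hpq
      · exact hqA hpq.symm
      · exact hpA hpq
      · exact htri hpq hpB hqB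
    · rw [hf0 p c0p] at heq
      by_cases c2q : C2 q
      · rw [hf2 q c0q c2q] at heq; exact absurd heq (by decide)
      · rw [hf1 q c0q c2q] at heq; exact absurd heq (by decide)
    · rw [hf0 q c0q] at heq
      by_cases c2p : C2 p
      · rw [hf2 p c0p c2p] at heq; exact absurd heq (by decide)
      · rw [hf1 p c0p c2p] at heq; exact absurd heq (by decide)
    · by_cases c2p : C2 p <;> by_cases c2q : C2 q
      · -- both class 2
        have hkey : ∀ r, ¬ C0 r → C2 r → r ≠ X → G.Adj r A := by
          intro r h0 h2 hX
          rcases h2 with rfl | ⟨h, _⟩ | ⟨h, _⟩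
          · exact absurd rfl hX
          · exact h
          · exact h
        by_cases hpX : p = X
        · have hpq' : G.Adj X q := hpX ▸ hpq
          have hqX : q ≠ X := fun h => G.irrefl (h ▸ hpq')
          have hqA : G.Adj q A := hkey q c0q c2q hqX
          rcases hdeg q hpq' with rfl | rfl
          · exact c0q (Or.inl rfl)
          · exact hAB' hqA.symm
        · by_cases hqX : q = X
          · have hpq' : G.Adj p X := hqX ▸ hpq
            have hpA : G.Adj p A := hkey p c0p c2p hpX
            rcases hdeg p hpq'.symm with rfl | rfl
            · exact c0p (Or.inl rfl)
            · exact hAB' hpA.symm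
          · exact htri hpq (hkey p c0p c2p hpX) (hkey q c0q c2q hqX)
      · rw [hf2 p c0p c2p, hf1 q c0q c2q] at heq; exact absurd heq (by decide)
      · rw [hf1 p c0p c2p, hf2 q c0q c2q] at heq; exact absurd heq (by decide)
      · -- both class 1
        have hnB : ∀ r, ¬ C0 r → ¬ C2 r → ¬ G.Adj r B := by
          intro r h0 h2 hrB
          have hrA : G.Adj r A := by
            by_contra hrA
            exact h0 (Or.inr ⟨hrB, hrA⟩)
          exact h2 (Or.inr (Or.inl ⟨hrA, hrB⟩))
        have hpB := hnB p c0p c2p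
        have hqB := hnB q c0q c2q
        have hpXne : p ≠ X := fun h => hpB (h ▸ hXB)
        have hqXne : q ≠ X := fun h => hqB (h ▸ hXB)
        have hpAne : p ≠ A := fun h => c0p (Or.inl h)
        have hqAne : q ≠ A := fun h => c0q (Or.inl h)
        by_cases hpA : G.Adj p A <;> by_cases hqA : G.Adj q A
        · exact htri hpq hpA hqA
        · by_cases hqBe : q = B
          · exact hpB (hqBe ▸ hpq)
          · exact c2p (Or.inr (Or.inr ⟨hpA, q, ⟨hqAne, hqBe, hqA, hqB⟩, hpq⟩))
        · by_cases hpBe : p = B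
          · exact hqB (hpBe ▸ hpq.symm)
          · exact c2q (Or.inr (Or.inr ⟨hqA, p, ⟨hpAne, hpBe, hpA, hpB⟩, hpq.symm⟩))
        · by_cases hpBe : p = B
          · exact hqB (hpBe ▸ hpq.symm)
          · by_cases hqBe : q = B
            · exact hpB (hqBe ▸ hpq)
            · obtain ⟨Cc⟩ := hCol
              have hg : ∀ p q, G.Adj p q → Cc p ≠ Cc q := fun _ _ h => Cc.valid h
              have e1 := hrig p hpAne hpBe hpA hpB Cc hg
              have e2 := hrig q hqAne hqBe hqA hqB Cc hg
              exact hg p q hpq (e1.trans e2.symm)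
  -- f values on a, b, X
  have hc0b : C0 b := Or.inr ⟨hbB, hbA⟩
  have hc0a : ¬ C0 a := by
    rintro (rfl | ⟨h, _⟩)
    · exact G.irrefl haA
    · exact haB h
  have hfa : f a ≠ f b := by
    rw [hf0 b hc0b]
    by_cases c2a : C2 a
    · rw [hf2 a hc0a c2a]; decide
    · rw [hf1 a hc0a c2a]; decide
  refine hmax a b hne_ab hab ⟨cf_add G hCF a b ?_, col_add G a b f hfproper hfa⟩
  intro c hca hcb
  have hcA : ¬ G.Adj c A := fun h => htri hca h haA
  have hcB : ¬ G.Adj c B := fun h => htri hcb h hbB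
  have hcAne : c ≠ A := fun h => hbA (h ▸ hcb).symm
  have hcBne : c ≠ B := fun h => haB (h ▸ hca).symm
  have heq := hrig c hcAne hcBne hcA hcB f hfproper
  have hfc : f c = 1 := by
    refine hf1 c ?_ ?_
    · rintro (rfl | ⟨h, _⟩)
      · exact hcAne rfl
      · exact hcB h
    · rintro (rfl | ⟨h, _⟩ | ⟨h, _⟩)
      · exact hXa hca
      · exact hcA h
      · exact hcA h
  have hfX : f X = 2 := by
    refine hf2 X ?_ (Or.inl rfl)
    rintro (rfl | ⟨_, h⟩)
    · exact G.irrefl hXA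
    · exact h hXA
  rw [hfc, hfX] at heq
  exact absurd heq (by decide)
end

section
/- Let G be a minimal prime graph complement with a vertex X of degree 2 having neighbors A and B. Then both of the sets S_A (vertices ≠ X adjacent to A but not B) and S_B (vertices ≠ X adjacent to B but not A) are nonempty. -/
open SimpleGraph

lemma tri_of {V : Type*} {G : SimpleGraph V} (hCF : G.CliqueFree 3) :
    ∀ a b c : V, G.Adj a b → G.Adj a c → G.Adj b c → False := by
  classical
  exact fun a b c h1 h2 h3 => hCF {a, b, c} (is3Clique_triple_iff.mpr ⟨h1, h2, h3⟩)

lemma cliqueFree_add_edge {V : Type*} {G : SimpleGraph V} {u v : V}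
    (hCF : G.CliqueFree 3)
    (hcommon : ∀ z, G.Adj u z → G.Adj v z → False) :
    (G ⊔ SimpleGraph.fromEdgeSet {s(u, v)}).CliqueFree 3 := by
  classical
  intro t ht
  rw [is3Clique_iff] at ht
  obtain ⟨a, b, c, hab, hac, hbc, -⟩ := ht
  have hne : ∀ {x y : V}, (G ⊔ SimpleGraph.fromEdgeSet {s(u, v)}).Adj x y →
      G.Adj x y ∨ (x = u ∧ y = v ∨ x = v ∧ y = u) := by
    intro x y h
    simp only [sup_adj, fromEdgeSet_adj, Set.mem_singleton_iff, Sym2.eq_iff] at h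
    tauto
  have hab' := hne hab; have hac' := hne hac; have hbc' := hne hbc
  have nab := hab.ne; have nac := hac.ne; have nbc := hbc.ne
  clear hab hac hbc
  rcases hab' with hab' | (⟨h1, h2⟩ | ⟨h1, h2⟩) <;>
    rcases hac' with hac' | (⟨h3, h4⟩ | ⟨h3, h4⟩) <;>
      rcases hbc' with hbc' | (⟨h5, h6⟩ | ⟨h5, h6⟩) <;>
        subst_vars <;>
          first
            | exact tri_of hCF a b c hab' hac' hbc'
            | exact (nab rfl)
            | exact (nac rfl)
            | exact (nbc rfl)
            | exact hcommon _ hac' hbc'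
            | exact hcommon _ hbc' hac'
            | exact hcommon _ hab' hbc'.symm
            | exact hcommon _ hbc'.symm hab'
            | exact hcommon _ hab'.symm hac'.symm
            | exact hcommon _ hac'.symm hab'.symm
            | simp_all



lemma key_s9 {V : Type*} [Fintype V] (G : SimpleGraph V)
    (hG : IsMinimalPrimeGraphComplement G) (X A B : V)
    (hXA : G.Adj X A) (hXB : G.Adj X B) (hAB : A ≠ B)
    (hdeg : ∀ v, G.Adj X v → v = A ∨ v = B)
    (hSA : ∀ a, a ≠ X → G.Adj a A → G.Adj a B) : False := by
  classical
  obtain ⟨hNT, hCF, hCol, hConn, hMax⟩ := hG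
  have tri := tri_of hCF
  have hnAB : ¬ G.Adj A B := fun h => tri X A B hXA hXB h
  obtain ⟨c⟩ := hCol
  -- recolored coloring with c' A = c' B
  set c' : V → Fin 3 := fun v => if v = A then c B else c v with hc'
  have hc'A : c' A = c B := by simp [hc']
  have hc'B : c' B = c B := by simp [hc', hAB.symm]
  have hc'prop : ∀ {x y : V}, G.Adj x y → c' x ≠ c' y := by
    intro x y hxy
    by_cases hx : x = A <;> by_cases hy : y = A
    · exact absurd (hx ▸ hy ▸ hxy) (G.irrefl)
    · subst hx
      simp only [hc', if_pos rfl, if_neg hy]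
      by_cases hyX : y = X
      · subst hyX; exact fun h => c.valid hXB h.symm
      · exact fun h => (c.valid (hSA y hyX hxy.symm)) h.symm
    · subst hy
      simp only [hc', if_neg hx, if_pos rfl]
      by_cases hxX : x = X
      · subst hxX; exact c.valid hXB
      · exact fun h => (c.valid (hSA x hxX hxy)) h
    · simp only [hc']; rw [if_neg hx, if_neg hy]; exact c.valid hxy
  -- Step 1: every y ∉ {X, A, B} is adjacent to B
  have step1 : ∀ y, y ≠ X → y ≠ A → y ≠ B → G.Adj y B := by
    intro y hyX hyA hyB
    by_contra hnyB
    have hnyA : ¬ G.Adj y A := fun h => hnyB (hSA y hyX h)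
    have hnXy : ¬ G.Adj X y := fun h => by rcases hdeg y h with rfl | rfl <;> simp_all
    refine hMax X y (Ne.symm hyX) hnXy ⟨?_, ?_⟩
    · refine cliqueFree_add_edge hCF ?_
      intro z hXz hyz
      rcases hdeg z hXz with rfl | rfl
      · exact hnyA hyz
      · exact hnyB hyz
    · -- recolor X
      obtain ⟨k, hk1, hk2⟩ : ∃ k : Fin 3, k ≠ c B ∧ k ≠ c' y := by
        have : ∀ a b : Fin 3, ∃ k : Fin 3, k ≠ a ∧ k ≠ b := by decide
        exact this _ _
      refine ⟨SimpleGraph.Coloring.mk (fun v => if v = X then k else c' v) ?_⟩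
      intro x y' hxy'
      rcases hxy' with hxy' | hxy'
      · by_cases hx : x = X <;> by_cases hy : y' = X
        · exact absurd (hx ▸ hy ▸ hxy') (G.irrefl)
        · subst hx
          simp only [if_pos rfl, if_neg hy]
          rcases hdeg y' hxy' with rfl | rfl
          · rw [hc'A]; exact hk1
          · rw [hc'B]; exact hk1
        · subst hy
          simp only [if_neg hx, if_pos rfl]
          rcases hdeg x hxy'.symm with rfl | rfl
          · rw [hc'A]; exact fun h => hk1 h.symm
          · rw [hc'B]; exact fun h => hk1 h.symm
        · simpa [hx, hy] using hc'prop hxy'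
      · rw [fromEdgeSet_adj, Set.mem_singleton_iff, Sym2.eq_iff] at hxy'
        rcases hxy'.1 with ⟨rfl, rfl⟩ | ⟨rfl, rfl⟩
        · simp only [if_pos rfl, if_neg hyX]; exact hk2
        · simp only [if_pos rfl, if_neg hyX]; exact fun h => hk2 h.symm
  -- Step 2: V \ {A, B} is independent
  have step2 : ∀ p q, p ≠ A → p ≠ B → q ≠ A → q ≠ B → ¬ G.Adj p q := by
    intro p q hpA hpB hqA hqB hpq
    by_cases hpX : p = X
    · subst hpX; rcases hdeg q hpq with rfl | rfl <;> simp_all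
    by_cases hqX : q = X
    · subst hqX; rcases hdeg p hpq.symm with rfl | rfl <;> simp_all
    exact tri p q B hpq (step1 p hpX hpA hpB) (step1 q hqX hqA hqB)
  -- Step 3: ∃ w ∉ {A, B} with ¬ Adj w A
  obtain ⟨w, hwA, hwB, hnwA⟩ : ∃ w, w ≠ A ∧ w ≠ B ∧ ¬ G.Adj w A := by
    by_contra hcon
    push_neg at hcon
    -- then {A, B} is closed under complement adjacency
    have closed : ∀ u v, u ∈ ({A, B} : Set V) → Gᶜ.Adj u v → v ∈ ({A, B} : Set V) := by
      intro u v hu huv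
      rw [compl_adj] at huv
      obtain ⟨hne, hnadj⟩ := huv
      by_contra hv
      simp only [Set.mem_insert_iff, Set.mem_singleton_iff, not_or] at hv
      obtain ⟨hvA, hvB⟩ := hv
      rcases hu with rfl | rfl
      · exact hnadj ((hcon v hvA hvB).symm)
      · by_cases hvX : v = X
        · subst hvX; exact hnadj hXB.symm
        · exact hnadj (step1 v hvX hvA hvB).symm
    have reach : Gᶜ.Reachable A X := (hConn.preconnected A X)
    obtain ⟨p⟩ := reach
    have : ∀ {u v : V} (p : Gᶜ.Walk u v), u ∈ ({A, B} : Set V) → v ∈ ({A, B} : Set V) := by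
      intro u v p
      induction p with
      | nil => exact id
      | cons h p ih => exact fun hu => ih (closed _ _ hu h)
    have hXmem := this p (by simp)
    have hXA' := G.ne_of_adj hXA
    have hXB' := G.ne_of_adj hXB
    simp only [Set.mem_insert_iff, Set.mem_singleton_iff] at hXmem
    rcases hXmem with rfl | rfl <;> simp_all
  have hwX : w ≠ X := fun h => hnwA (h ▸ hXA)
  have hwBadj : G.Adj w B := step1 w hwX hwA hwB
  have hNw : ∀ z, G.Adj w z → z = B := by
    intro z hz
    by_contra hzB
    have hzA : z ≠ A := fun h => hnwA (h ▸ hz)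
    exact step2 w z hwA hwB hzA hzB hz
  refine hMax A w (Ne.symm hwA) (fun h => hnwA h.symm) ⟨?_, ?_⟩
  · refine cliqueFree_add_edge hCF ?_
    intro z hAz hwz
    have := hNw z hwz
    subst this
    exact hnAB hAz
  · obtain ⟨k, hk⟩ : ∃ k : Fin 3, k ≠ c B := by
      have : ∀ a : Fin 3, ∃ k : Fin 3, k ≠ a := by decide
      exact this _
    refine ⟨SimpleGraph.Coloring.mk (fun v => if v = w then k else c' v) ?_⟩
    intro x y hxy
    rcases hxy with hxy | hxy
    · by_cases hx : x = w <;> by_cases hy : y = w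
      · exact absurd (hx ▸ hy ▸ hxy) (G.irrefl)
      · subst hx
        have := hNw y hxy; subst this
        simp only [if_pos rfl, if_neg hy, hc'B]; exact hk
      · subst hy
        have := hNw x hxy.symm; subst this
        simp only [if_neg hx, if_pos rfl, hc'B]; exact fun h => hk h.symm
      · simpa [hx, hy] using hc'prop hxy
    · rw [fromEdgeSet_adj, Set.mem_singleton_iff, Sym2.eq_iff] at hxy
      rcases hxy.1 with ⟨rfl, rfl⟩ | ⟨rfl, rfl⟩
      · simp only [if_pos rfl, if_neg (Ne.symm hwA), hc'A]; exact fun h => hk h.symm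
      · simp only [if_pos rfl, if_neg (Ne.symm hwA), hc'A]; exact hk

theorem SA_SB_nonempty {V : Type*} [Fintype V] (G : SimpleGraph V)
    (hG : IsMinimalPrimeGraphComplement G) (X A B : V)
    (hXA : G.Adj X A) (hXB : G.Adj X B) (hAB : A ≠ B)
    (hdeg : ∀ v, G.Adj X v → v = A ∨ v = B) :
    (∃ a : V, a ≠ X ∧ G.Adj a A ∧ ¬ G.Adj a B) ∧
    (∃ b : V, b ≠ X ∧ G.Adj b B ∧ ¬ G.Adj b A) := by
  constructor
  · by_contra h
    push_neg at h
    exact (key_s9 G hG X A B hXA hXB hAB hdeg h).elim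
  · by_contra h
    push_neg at h
    exact (key_s9 G hG X B A hXB hXA hAB.symm (fun v hv => (hdeg v hv).symm) h).elim
end

section
/- A minimal prime graph complement is not bipartite. -/
theorem mpgc_not_bipartite {V : Type*} [Fintype V] (G : SimpleGraph V)
    (hG : IsMinimalPrimeGraphComplement G) :
    ¬ G.Colorable 2 := by
  classical
  obtain ⟨hV, hCF, hCol, hConn, hMax⟩ := hG
  rintro ⟨c⟩
  by_cases h : ∃ u v, u ≠ v ∧ ¬ G.Adj u v ∧ c u ≠ c v
  · obtain ⟨u, v, huv, hadj, hc⟩ := h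
    apply hMax u v huv hadj
    have hcol2 : (G ⊔ SimpleGraph.fromEdgeSet {s(u, v)}).Colorable 2 := by
      refine ⟨SimpleGraph.Coloring.mk c ?_⟩
      intro a b hab
      rw [SimpleGraph.sup_adj] at hab
      rcases hab with hab | hab
      · exact c.valid hab
      · rw [SimpleGraph.fromEdgeSet_adj] at hab
        obtain ⟨hmem, hne⟩ := hab
        simp only [Set.mem_singleton_iff, Sym2.eq, Sym2.rel_iff', Prod.mk.injEq,
          Prod.swap_prod_mk] at hmem
        rcases hmem with ⟨rfl, rfl⟩ | ⟨rfl, rfl⟩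
        · exact hc
        · exact hc.symm
    exact ⟨hcol2.cliqueFree (by norm_num), hcol2.mono (by norm_num)⟩
  · push_neg at h
    have key : ∀ a b : V, Gᶜ.Reachable a b → c a = c b := by
      intro a b hr
      obtain ⟨w⟩ := hr
      induction w with
      | nil => rfl
      | cons hadj p ih =>
        rw [SimpleGraph.compl_adj] at hadj
        exact (h _ _ hadj.1 hadj.2).trans ih
    have hempty : ∀ a b : V, ¬ G.Adj a b := by
      intro a b hab
      exact c.valid hab (key a b (hConn.preconnected a b))
    obtain ⟨u, v, huv⟩ := hV
    apply hMax u v huv (hempty u v)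
    have hcol2 : (G ⊔ SimpleGraph.fromEdgeSet {s(u, v)}).Colorable 2 := by
      refine ⟨SimpleGraph.Coloring.mk (fun w => if w = v then 1 else 0) ?_⟩
      intro a b hab
      rw [SimpleGraph.sup_adj] at hab
      rcases hab with hab | hab
      · exact absurd hab (hempty a b)
      · rw [SimpleGraph.fromEdgeSet_adj] at hab
        obtain ⟨hmem, hne⟩ := hab
        simp only [Set.mem_singleton_iff, Sym2.eq, Sym2.rel_iff', Prod.mk.injEq,
          Prod.swap_prod_mk] at hmem
        rcases hmem with ⟨rfl, rfl⟩ | ⟨rfl, rfl⟩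
        · simp [huv]
        · simp [huv]
    exact ⟨hcol2.cliqueFree (by norm_num), hcol2.mono (by norm_num)⟩
end

section
/- Let G be a minimal prime graph complement with a vertex X of degree 2 having neighbors A and B. Then the vertex set of G can be partitioned into five nonempty sets P_X, P_A, P_B, P_a, P_b (with X ∈ P_X, A ∈ P_A, B ∈ P_B) such that two vertices are adjacent in G if and only if they lie in consecutive classes of the 5-cycle P_X — P_A — P_a — P_b — P_B — P_X. In other words, G is a blow-up of the 5-cycle C_5 by independent sets. -/
open scoped Classical in
/-- Canonical coloring: color 0 for neighbors of `A`, color 1 for neighbors of `B`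
that are not neighbors of `A`, color 2 otherwise. -/
noncomputable def mpgcCanon {V : Type*} (G : SimpleGraph V) (A B : V) : V → Fin 3 :=
  fun y => if G.Adj y A then 0 else if G.Adj y B then 1 else 2

lemma mpgcCanon_eq0 {V : Type*} {G : SimpleGraph V} {A B y : V} (h : G.Adj y A) :
    mpgcCanon G A B y = 0 := by simp [mpgcCanon, h]

lemma mpgcCanon_eq1 {V : Type*} {G : SimpleGraph V} {A B y : V} (h1 : ¬ G.Adj y A)
    (h2 : G.Adj y B) : mpgcCanon G A B y = 1 := by simp [mpgcCanon, h1, h2]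

lemma mpgcCanon_eq2 {V : Type*} {G : SimpleGraph V} {A B y : V} (h1 : ¬ G.Adj y A)
    (h2 : ¬ G.Adj y B) : mpgcCanon G A B y = 2 := by simp [mpgcCanon, h1, h2]

/-- Adding an edge between two vertices with no common neighbor preserves
triangle-freeness. -/
lemma mpgc_cf3_sup {V : Type*} (G : SimpleGraph V) (hcf : G.CliqueFree 3) (u v : V)
    (h : ∀ w, G.Adj u w → G.Adj v w → False) :
    (G ⊔ SimpleGraph.fromEdgeSet {s(u, v)}).CliqueFree 3 := by
  classical
  intro t ht
  rw [SimpleGraph.is3Clique_iff] at ht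
  obtain ⟨a, b, c, hab, hac, hbc, rfl⟩ := ht
  have tri : ∀ x y z : V, G.Adj x y → G.Adj x z → G.Adj y z → False := fun x y z h1 h2 h3 =>
    hcf {x, y, z} (SimpleGraph.is3Clique_triple_iff.mpr ⟨h1, h2, h3⟩)
  have conv : ∀ x y : V, (G ⊔ SimpleGraph.fromEdgeSet {s(u, v)}).Adj x y →
      G.Adj x y ∨ ((x = u ∧ y = v) ∨ (x = v ∧ y = u)) := by
    intro x y hxy
    rcases hxy with h' | h'
    · exact Or.inl h'
    · rw [SimpleGraph.fromEdgeSet_adj, Set.mem_singleton_iff, Sym2.eq_iff] at h'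
      exact Or.inr h'.1
  have hne_ab : a ≠ b := hab.ne
  have hne_ac : a ≠ c := hac.ne
  have hne_bc : b ≠ c := hbc.ne
  rcases conv a b hab with h1 | h1 <;>
    rcases conv a c hac with h2 | h2 <;>
      rcases conv b c hbc with h3 | h3
  · exact tri a b c h1 h2 h3
  · -- bc is the new edge: a is a common neighbor of u and v
    rcases h3 with ⟨rfl, rfl⟩ | ⟨rfl, rfl⟩
    · exact h a h1.symm h2.symm
    · exact h a h2.symm h1.symm
  · -- ac new
    rcases h2 with ⟨rfl, rfl⟩ | ⟨rfl, rfl⟩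
    · exact h b h1 h3.symm
    · exact h b h3.symm h1
  · -- ac and bc new : forces equalities
    rcases h2 with ⟨rfl, rfl⟩ | ⟨rfl, rfl⟩ <;> rcases h3 with ⟨h3a, h3b⟩ | ⟨h3a, h3b⟩ <;> simp_all
  · -- ab new
    rcases h1 with ⟨rfl, rfl⟩ | ⟨rfl, rfl⟩
    · exact h c h2 h3
    · exact h c h3 h2
  · -- ab, bc new
    rcases h1 with ⟨rfl, rfl⟩ | ⟨rfl, rfl⟩ <;> rcases h3 with ⟨h3a, h3b⟩ | ⟨h3a, h3b⟩ <;> simp_all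
  · -- ab, ac new
    rcases h1 with ⟨rfl, rfl⟩ | ⟨rfl, rfl⟩ <;> rcases h2 with ⟨h2a, h2b⟩ | ⟨h2a, h2b⟩ <;> simp_all
  · -- all new
    rcases h1 with ⟨rfl, rfl⟩ | ⟨rfl, rfl⟩ <;> rcases h2 with ⟨h2a, h2b⟩ | ⟨h2a, h2b⟩ <;> simp_all

theorem mpgc_deg2_blowup_C5 {V : Type*} [Fintype V] (G : SimpleGraph V)
    (hG : IsMinimalPrimeGraphComplement G) (X A B : V)
    (hXA : G.Adj X A) (hXB : G.Adj X B) (hAB : A ≠ B)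
    (hdeg : ∀ v, G.Adj X v → v = A ∨ v = B) :
    ∃ PX PA PB Pa Pb : Set V,
      X ∈ PX ∧ A ∈ PA ∧ B ∈ PB ∧ Pa.Nonempty ∧ Pb.Nonempty ∧
      (∀ v : V, v ∈ PX ∨ v ∈ PA ∨ v ∈ PB ∨ v ∈ Pa ∨ v ∈ Pb) ∧
      [PX, PA, PB, Pa, Pb].Pairwise Disjoint ∧
      (∀ u v : V, G.Adj u v ↔
        ((u ∈ PX ∧ v ∈ PA) ∨ (u ∈ PA ∧ v ∈ PX) ∨
         (u ∈ PA ∧ v ∈ Pa) ∨ (u ∈ Pa ∧ v ∈ PA) ∨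
         (u ∈ Pa ∧ v ∈ Pb) ∨ (u ∈ Pb ∧ v ∈ Pa) ∨
         (u ∈ Pb ∧ v ∈ PB) ∨ (u ∈ PB ∧ v ∈ Pb) ∨
         (u ∈ PB ∧ v ∈ PX) ∨ (u ∈ PX ∧ v ∈ PB))) := by
  classical
  obtain ⟨hnt, hcf, hcol, hconn, hmax⟩ := hG
  have tri : ∀ a b c : V, G.Adj a b → G.Adj a c → G.Adj b c → False := fun a b c h1 h2 h3 =>
    hcf {a, b, c} (SimpleGraph.is3Clique_triple_iff.mpr ⟨h1, h2, h3⟩)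
  have hnAB : ¬ G.Adj A B := fun h => tri X A B hXA hXB h
  have hnBA : ¬ G.Adj B A := fun h => hnAB h.symm
  obtain ⟨c₀⟩ := hcol
  -- Lemma M: a non-edge with no common neighbor is identified by every 3-coloring
  have LM : ∀ u v : V, u ≠ v → ¬ G.Adj u v → (∀ w, G.Adj u w → G.Adj v w → False) →
      ∀ c : G.Coloring (Fin 3), c u = c v := by
    intro u v hne hna hcn c
    by_contra hcc
    refine hmax u v hne hna ⟨mpgc_cf3_sup G hcf u v hcn, ⟨SimpleGraph.Coloring.mk c ?_⟩⟩
    intro x y hxy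
    rcases hxy with h' | h'
    · exact c.valid h'
    · rw [SimpleGraph.fromEdgeSet_adj, Set.mem_singleton_iff, Sym2.eq_iff] at h'
      rcases h'.1 with ⟨rfl, rfl⟩ | ⟨rfl, rfl⟩
      · exact hcc
      · exact fun hh => hcc hh.symm
  -- every coloring identifies X with any vertex not adjacent to A nor B (other than A, B)
  have S0eq : ∀ y, ¬ G.Adj y A → ¬ G.Adj y B → y ≠ A → y ≠ B →
      ∀ c : G.Coloring (Fin 3), c X = c y := by
    intro y h1 h2 h3 h4 c
    have hne : X ≠ y := fun h => h1 (h ▸ hXA)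
    have hna : ¬ G.Adj X y := by
      intro h; rcases hdeg y h with rfl | rfl
      · exact h3 rfl
      · exact h4 rfl
    have hnc : ∀ w, G.Adj X w → G.Adj y w → False := by
      intro w hXw hyw; rcases hdeg w hXw with rfl | rfl
      · exact h1 hyw
      · exact h2 hyw
    exact LM X y hne hna hnc c
  -- the canonical coloring is proper
  have fcol : ∀ {x y : V}, G.Adj x y → mpgcCanon G A B x ≠ mpgcCanon G A B y := by
    intro x y hxy
    by_cases hxA : G.Adj x A <;> by_cases hyA : G.Adj y A
    · exact (tri x y A hxy hxA hyA).elim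
    · rw [mpgcCanon_eq0 hxA]
      by_cases hyB : G.Adj y B
      · rw [mpgcCanon_eq1 hyA hyB]; decide
      · rw [mpgcCanon_eq2 hyA hyB]; decide
    · rw [mpgcCanon_eq0 hyA]
      by_cases hxB : G.Adj x B
      · rw [mpgcCanon_eq1 hxA hxB]; decide
      · rw [mpgcCanon_eq2 hxA hxB]; decide
    · by_cases hxB : G.Adj x B <;> by_cases hyB : G.Adj y B
      · exact (tri x y B hxy hxB hyB).elim
      · rw [mpgcCanon_eq1 hxA hxB, mpgcCanon_eq2 hyA hyB]; decide
      · rw [mpgcCanon_eq2 hxA hxB, mpgcCanon_eq1 hyA hyB]; decide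
      · -- both are in S₀; they cannot be adjacent
        exfalso
        have hx : x ≠ A := fun h => hyA (h ▸ hxy).symm
        have hx' : x ≠ B := fun h => hyB (h ▸ hxy).symm
        have hy : y ≠ A := fun h => hxA (h ▸ hxy)
        have hy' : y ≠ B := fun h => hxB (h ▸ hxy)
        have e1 := S0eq x hxA hxB hx hx' c₀
        have e2 := S0eq y hyA hyB hy hy' c₀
        exact c₀.valid hxy (e1 ▸ e2 ▸ rfl)
  let fc : G.Coloring (Fin 3) := SimpleGraph.Coloring.mk (mpgcCanon G A B) fcol
  have fc_eq : ∀ z, fc z = mpgcCanon G A B z := fun z => rfl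
  -- coverage fact: no vertex outside {A, B} misses both A and B
  have F : ∀ y, ¬ G.Adj y A → ¬ G.Adj y B → y = A ∨ y = B := by
    intro y h1 h2
    by_contra hcon
    push_neg at hcon
    have := S0eq y h1 h2 hcon.1 hcon.2 fc
    rw [fc_eq, fc_eq, mpgcCanon_eq0 hXA, mpgcCanon_eq2 h1 h2] at this
    exact absurd this (by decide)
  -- all Pa–Pb edges are present
  have step2 : ∀ u v, G.Adj u A → ¬ G.Adj u B → G.Adj v B → ¬ G.Adj v A → G.Adj u v := by
    intro u v huA huB hvB hvA
    by_contra hna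
    have hne : u ≠ v := fun h => hvA (h ▸ huA)
    have hnc : ∀ w, G.Adj u w → G.Adj v w → False := by
      intro w huw hvw
      have hwA : ¬ G.Adj w A := fun h => tri u w A huw huA h
      have hwB : ¬ G.Adj w B := fun h => tri v w B hvw hvB h
      have hwA' : w ≠ A := fun h => hvA (h ▸ hvw)
      have hwB' : w ≠ B := fun h => huB (h ▸ huw)
      rcases F w hwA hwB with rfl | rfl
      · exact hwA' rfl
      · exact hwB' rfl
    have := LM u v hne hna hnc fc
    rw [fc_eq, fc_eq, mpgcCanon_eq0 huA, mpgcCanon_eq1 hvA hvB] at this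
    exact absurd this (by decide)
  -- Pa is nonempty
  have PaNE : ∃ u, G.Adj u A ∧ ¬ G.Adj u B := by
    by_contra hno
    push_neg at hno
    by_cases hb : ∃ v, G.Adj v B ∧ ¬ G.Adj v A
    · obtain ⟨v, hvB, hvA⟩ := hb
      have hne : A ≠ v := fun hh => hnAB (hh ▸ hvB)
      have hna : ¬ G.Adj A v := fun hh => hvA hh.symm
      have hnc : ∀ w, G.Adj A w → G.Adj v w → False := by
        intro w hAw hvw
        exact tri v w B hvw hvB (hno w hAw.symm)
      have := LM A v hne hna hnc fc
      rw [fc_eq, fc_eq, mpgcCanon_eq2 (G.irrefl) hnAB, mpgcCanon_eq1 hvA hvB] at this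
      exact absurd this (by decide)
    · push_neg at hb
      -- the complement is disconnected: {y | Adj y A} is closed
      have closed : ∀ y z, G.Adj y A → Gᶜ.Adj y z → G.Adj z A := by
        intro y z hy hyz
        rw [SimpleGraph.compl_adj] at hyz
        obtain ⟨hne', hn⟩ := hyz
        by_contra hzA
        have hzB : ¬ G.Adj z B := fun hh => hzA (hb z hh)
        rcases F z hzA hzB with rfl | rfl
        · exact hn hy
        · exact hn (hno y hy)
      have key : ∀ (y z : V) (p : Gᶜ.Walk y z), G.Adj y A → G.Adj z A := by
        intro y z p
        induction p with
        | nil => exact id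
        | cons h' q ih => exact fun hy => ih (closed _ _ hy h')
      obtain ⟨p⟩ := hconn.preconnected X A
      exact G.irrefl (key X A p hXA)
  -- Pb is nonempty
  have PbNE : ∃ v, G.Adj v B ∧ ¬ G.Adj v A := by
    by_contra hno
    push_neg at hno
    obtain ⟨u, huA, huB⟩ := PaNE
    have hne : B ≠ u := fun hh => hnBA (hh ▸ huA)
    have hna : ¬ G.Adj B u := fun hh => huB hh.symm
    have hnc : ∀ w, G.Adj B w → G.Adj u w → False := by
      intro w hBw huw
      exact tri u w A huw huA (hno w hBw.symm)
    have := LM B u hne hna hnc fc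
    rw [fc_eq, fc_eq, mpgcCanon_eq2 hnBA (G.irrefl), mpgcCanon_eq0 huA] at this
    exact absurd this (by decide)
  have cover : ∀ v, (G.Adj v A ∧ G.Adj v B) ∨ v = A ∨ v = B ∨
      (G.Adj v A ∧ ¬ G.Adj v B) ∨ (G.Adj v B ∧ ¬ G.Adj v A) := by
    intro v
    by_cases h1 : G.Adj v A <;> by_cases h2 : G.Adj v B
    · exact Or.inl ⟨h1, h2⟩
    · exact Or.inr (Or.inr (Or.inr (Or.inl ⟨h1, h2⟩)))
    · exact Or.inr (Or.inr (Or.inr (Or.inr ⟨h2, h1⟩)))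
    · rcases F v h1 h2 with rfl | rfl
      · exact Or.inr (Or.inl rfl)
      · exact Or.inr (Or.inr (Or.inl rfl))
  refine ⟨{y | G.Adj y A ∧ G.Adj y B}, {A}, {B}, {y | G.Adj y A ∧ ¬ G.Adj y B},
    {y | G.Adj y B ∧ ¬ G.Adj y A}, ⟨hXA, hXB⟩, rfl, rfl, PaNE, PbNE, ?_, ?_, ?_⟩
  · intro v
    rcases cover v with h | h | h | h | h
    · exact Or.inl h
    · exact Or.inr (Or.inl h)
    · exact Or.inr (Or.inr (Or.inl h))
    · exact Or.inr (Or.inr (Or.inr (Or.inl h)))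
    · exact Or.inr (Or.inr (Or.inr (Or.inr h)))
  · -- pairwise disjoint
    refine List.Pairwise.cons ?_ (List.Pairwise.cons ?_ (List.Pairwise.cons ?_
      (List.Pairwise.cons ?_ (List.Pairwise.cons (by simp) List.Pairwise.nil))))
    · intro s hs
      simp only [List.mem_cons, List.not_mem_nil, or_false] at hs
      rcases hs with rfl | rfl | rfl | rfl
      · exact Set.disjoint_left.mpr fun x hx hx' => G.irrefl (hx' ▸ hx.1)
      · exact Set.disjoint_left.mpr fun x hx hx' => G.irrefl (hx' ▸ hx.2)
      · exact Set.disjoint_left.mpr fun x hx hx' => hx'.2 hx.2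
      · exact Set.disjoint_left.mpr fun x hx hx' => hx'.2 hx.1
    · intro s hs
      simp only [List.mem_cons, List.not_mem_nil, or_false] at hs
      rcases hs with rfl | rfl | rfl
      · exact Set.disjoint_left.mpr fun x hx hx' => hAB (hx ▸ hx' ▸ rfl)
      · exact Set.disjoint_left.mpr fun x hx hx' => G.irrefl (hx ▸ hx'.1)
      · exact Set.disjoint_left.mpr fun x hx hx' => hnAB (hx ▸ hx'.1)
    · intro s hs
      simp only [List.mem_cons, List.not_mem_nil, or_false] at hs
      rcases hs with rfl | rfl
      · exact Set.disjoint_left.mpr fun x hx hx' => hnBA (hx ▸ hx'.1)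
      · exact Set.disjoint_left.mpr fun x hx hx' => G.irrefl (hx ▸ hx'.1)
    · intro s hs
      simp only [List.mem_cons, List.not_mem_nil, or_false] at hs
      rcases hs with rfl
      exact Set.disjoint_left.mpr fun x hx hx' => hx'.2 hx.1
  · intro u v
    constructor
    · intro huv
      rcases cover u with ⟨huA, huB⟩ | rfl | rfl | ⟨huA, huB⟩ | ⟨huB, huA⟩
      · have hvA : ¬ G.Adj v A := fun hh => tri u v A huv huA hh
        have hvB : ¬ G.Adj v B := fun hh => tri u v B huv huB hh
        rcases F v hvA hvB with rfl | rfl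
        · exact Or.inl ⟨⟨huA, huB⟩, rfl⟩
        · exact Or.inr (Or.inr (Or.inr (Or.inr (Or.inr (Or.inr (Or.inr (Or.inr
            (Or.inr ⟨⟨huA, huB⟩, rfl⟩))))))))
      · have hvA := huv.symm
        by_cases hvB : G.Adj v B
        · exact Or.inr (Or.inl ⟨rfl, hvA, hvB⟩)
        · exact Or.inr (Or.inr (Or.inl ⟨rfl, hvA, hvB⟩))
      · have hvB := huv.symm
        by_cases hvA : G.Adj v A
        · exact Or.inr (Or.inr (Or.inr (Or.inr (Or.inr (Or.inr (Or.inr (Or.inr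
            (Or.inl ⟨rfl, hvA, hvB⟩))))))))
        · exact Or.inr (Or.inr (Or.inr (Or.inr (Or.inr (Or.inr (Or.inr
            (Or.inl ⟨rfl, hvB, hvA⟩)))))))
      · have hvA : ¬ G.Adj v A := fun hh => tri u v A huv huA hh
        by_cases hvB : G.Adj v B
        · exact Or.inr (Or.inr (Or.inr (Or.inr (Or.inl ⟨⟨huA, huB⟩, hvB, hvA⟩))))
        · rcases F v hvA hvB with rfl | rfl
          · exact Or.inr (Or.inr (Or.inr (Or.inl ⟨⟨huA, huB⟩, rfl⟩)))
          · exact absurd huv huB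
      · have hvB : ¬ G.Adj v B := fun hh => tri u v B huv huB hh
        by_cases hvA : G.Adj v A
        · exact Or.inr (Or.inr (Or.inr (Or.inr (Or.inr (Or.inl ⟨⟨huB, huA⟩, hvA, hvB⟩)))))
        · rcases F v hvA hvB with rfl | rfl
          · exact absurd huv huA
          · exact Or.inr (Or.inr (Or.inr (Or.inr (Or.inr (Or.inr (Or.inl ⟨⟨huB, huA⟩, rfl⟩))))))
    · intro h
      rcases h with ⟨h1, h2⟩ | ⟨h1, h2⟩ | ⟨h1, h2⟩ | ⟨h1, h2⟩ | ⟨h1, h2⟩ | ⟨h1, h2⟩ |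
        ⟨h1, h2⟩ | ⟨h1, h2⟩ | ⟨h1, h2⟩ | ⟨h1, h2⟩
      · obtain rfl : v = A := h2; exact h1.1
      · obtain rfl : u = A := h1; exact h2.1.symm
      · obtain rfl : u = A := h1; exact h2.1.symm
      · obtain rfl : v = A := h2; exact h1.1
      · exact step2 u v h1.1 h1.2 h2.1 h2.2
      · exact (step2 v u h2.1 h2.2 h1.1 h1.2).symm
      · obtain rfl : v = B := h2; exact h1.1
      · obtain rfl : u = B := h1; exact h2.1.symm
      · obtain rfl : u = B := h1; exact h2.2.symm
      · obtain rfl : v = B := h2; exact h1.2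
end
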